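/- arXiv:1802.00192 — 3 statements merged into one kernel-verified Lean document; each statement's English description precedes it below -/
import Mathlib

section
/- If p = 3 divides 2(n-1) exactly once (α = 1, β = 2(n-1)/3) and -3 is a quadratic residue modulo 4(n-1)/3, then the admissible triple (3,11,0) yields invariant lattice T = ⟨β⟩ and co-invariant lattice S ≅ U^{⊕2} ⊕ E_8^{⊕2} ⊕ A_2, as orthogonal primitive sublattices of L with L = T ⊕ S. -/
open Matrix

/-- A submodule of `ℤ^m` is primitive if the quotient by it is torsion-free. -/
def IsPrimitiveSub {m : Type*} (T : Submodule ℤ (m → ℤ)) : Prop :=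
  ∀ (v : m → ℤ) (k : ℤ), k ≠ 0 → k • v ∈ T → v ∈ T

/-- Gram matrix of the hyperbolic plane `U`. -/
def Ugram : Matrix (Fin 2) (Fin 2) ℤ := !![0, 1; 1, 0]

/-- Gram matrix of the negative definite root lattice `A₂`. -/
def A2gram : Matrix (Fin 2) (Fin 2) ℤ := !![-2, 1; 1, -2]

/-- Gram matrix of the negative definite root lattice `E₈`
(nodes 0–6 a chain, node 7 attached to node 2). -/
def E8gram : Matrix (Fin 8) (Fin 8) ℤ := fun i j =>
  if i = j then -2
  else if ((i : ℕ) + 1 = (j : ℕ) ∧ (j : ℕ) ≤ 6) ∨ ((j : ℕ) + 1 = (i : ℕ) ∧ (i : ℕ) ≤ 6)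
    then 1
  else if ((i : ℕ) = 2 ∧ (j : ℕ) = 7) ∨ ((i : ℕ) = 7 ∧ (j : ℕ) = 2) then 1
  else 0

/-- Index type for the lattice `L = U^{⊕3} ⊕ E₈^{⊕2} ⊕ ⟨-2(n-1)⟩` of rank 23. -/
abbrev K3Idx : Type := (Fin 3 × Fin 2) ⊕ ((Fin 2 × Fin 8) ⊕ Unit)

/-- Gram matrix of `L = U^{⊕3} ⊕ E₈^{⊕2} ⊕ ⟨-2(n-1)⟩`. -/
def LK3gram (n : ℕ) : Matrix K3Idx K3Idx ℤ := fun i j =>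
  match i, j with
  | Sum.inl (k, i), Sum.inl (l, j) => if k = l then Ugram i j else 0
  | Sum.inr (Sum.inl (k, i)), Sum.inr (Sum.inl (l, j)) => if k = l then E8gram i j else 0
  | Sum.inr (Sum.inr _), Sum.inr (Sum.inr _) => -(2 * ((n : ℤ) - 1))
  | _, _ => 0

/-- Index type for the rank-22 lattice `U^{⊕2} ⊕ E₈^{⊕2} ⊕ A₂`. -/
abbrev SIdx : Type := (Fin 2 × Fin 2) ⊕ ((Fin 2 × Fin 8) ⊕ Fin 2)

/-- Gram matrix of `U^{⊕2} ⊕ E₈^{⊕2} ⊕ A₂`. -/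
def Sgram : Matrix SIdx SIdx ℤ := fun i j =>
  match i, j with
  | Sum.inl (k, i), Sum.inl (l, j) => if k = l then Ugram i j else 0
  | Sum.inr (Sum.inl (k, i)), Sum.inr (Sum.inl (l, j)) => if k = l then E8gram i j else 0
  | Sum.inr (Sum.inr i), Sum.inr (Sum.inr j) => A2gram i j
  | _, _ => 0

/-!
Write `2(n-1) = 3β`. As `3 ∤ 2β`, a square root of `-3` modulo `2β` divided by `3` gives
`t, c` with `2βt - 3c² = 1`. In the summand `U ⊕ ⟨-3β⟩` of `L` (basis `e, f, w`) the vector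
`v = βt e + β f + c w` has norm `β(2βt - 3c²) = β`, and `v, -t e + f, 3c e + w` is a basis
(its determinant is `2βt - 3c² = 1`) whose last two vectors span `v^⊥`. That complement is even,
negative definite and of determinant `3`, so Gauss reduction identifies it with `A₂`. Hence
`L = ⟨v⟩ ⊕ (U^{⊕2} ⊕ E₈^{⊕2} ⊕ A₂)` through a unimodular change of basis, which makes both
summands primitive and complementary.
-/

def IntCongruent {ι κ : Type*} [Fintype ι] [Fintype κ] [DecidableEq ι] [DecidableEq κ]
    (G : Matrix ι ι ℤ) (H : Matrix κ κ ℤ) : Prop :=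
  ∃ (M : Matrix ι κ ℤ) (N : Matrix κ ι ℤ), M * N = 1 ∧ N * M = 1 ∧ Mᵀ * G * M = H

namespace IntCongruent

variable {ι κ μ ι' κ' : Type*} [Fintype ι] [Fintype κ] [Fintype μ] [Fintype ι'] [Fintype κ']
  [DecidableEq ι] [DecidableEq κ] [DecidableEq μ] [DecidableEq ι'] [DecidableEq κ']
  {G : Matrix ι ι ℤ} {H : Matrix κ κ ℤ} {K : Matrix μ μ ℤ}

theorem refl (G : Matrix ι ι ℤ) : IntCongruent G G :=
  ⟨1, 1, Matrix.mul_one 1, Matrix.mul_one 1, by simp⟩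

theorem symm (h : IntCongruent G H) : IntCongruent H G := by
  obtain ⟨M, N, hMN, hNM, rfl⟩ := h
  refine ⟨N, M, hNM, hMN, ?_⟩
  calc Nᵀ * (Mᵀ * G * M) * N = (M * N)ᵀ * G * (M * N) := by
        simp only [transpose_mul, Matrix.mul_assoc]
    _ = G := by simp [hMN]

theorem trans (h₁ : IntCongruent G H) (h₂ : IntCongruent H K) : IntCongruent G K := by
  obtain ⟨M, N, hMN, hNM, rfl⟩ := h₁
  obtain ⟨M', N', hMN', hNM', rfl⟩ := h₂
  refine ⟨M * M', N' * N, ?_, ?_, ?_⟩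
  · rw [Matrix.mul_assoc, ← Matrix.mul_assoc M', hMN', Matrix.one_mul, hMN]
  · rw [Matrix.mul_assoc, ← Matrix.mul_assoc N, hNM, Matrix.one_mul, hNM']
  · simp only [transpose_mul, Matrix.mul_assoc]

theorem submatrix_equiv (G : Matrix ι ι ℤ) (e : κ ≃ ι) : IntCongruent G (G.submatrix e e) := by
  refine ⟨(1 : Matrix ι ι ℤ).submatrix id e, (1 : Matrix ι ι ℤ).submatrix e id, ?_, ?_, ?_⟩
  · simp [mul_submatrix_one]
  all_goals ext; simp [Matrix.mul_apply, Matrix.one_apply]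

theorem fromBlocks {G' : Matrix ι' ι' ℤ} {H' : Matrix κ' κ' ℤ}
    (h : IntCongruent G H) (h' : IntCongruent G' H') :
    IntCongruent (Matrix.fromBlocks G 0 0 G') (Matrix.fromBlocks H 0 0 H') := by
  obtain ⟨M, N, hMN, hNM, rfl⟩ := h
  obtain ⟨M', N', hMN', hNM', rfl⟩ := h'
  refine ⟨Matrix.fromBlocks M 0 0 M', Matrix.fromBlocks N 0 0 N', ?_, ?_, ?_⟩ <;>
    simp [fromBlocks_multiply, fromBlocks_transpose, hMN, hNM, hMN', hNM']

theorem neg (h : IntCongruent G H) : IntCongruent (-G) (-H) := by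
  obtain ⟨M, N, hMN, hNM, rfl⟩ := h
  exact ⟨M, N, hMN, hNM, by simp⟩

end IntCongruent

section Splitting

variable {R ι κ μ : Type*} [CommRing R] [Fintype ι]
  {A : Matrix ι κ R} {B : Matrix ι μ R} {A' : Matrix κ ι R} {B' : Matrix μ ι R}

theorem fromRows_mul_fromCols_eq_one_iff [DecidableEq κ] [DecidableEq μ] :
    fromRows A' B' * fromCols A B = 1 ↔ A' * A = 1 ∧ A' * B = 0 ∧ B' * A = 0 ∧ B' * B = 1 := by
  rw [fromRows_mul_fromCols, ← fromBlocks_one, fromBlocks_inj]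

theorem transpose_fromCols_mul_mul_fromCols (G : Matrix ι ι R) :
    (fromCols A B)ᵀ * G * fromCols A B =
      fromBlocks (Aᵀ * G * A) (Aᵀ * G * B) (Bᵀ * G * A) (Bᵀ * G * B) := by
  rw [transpose_fromCols, fromRows_mul, fromRows_mul_fromCols]

theorem injective_mulVecLin_of_mul_eq_one [Fintype κ] [DecidableEq κ] (h : A' * A = 1) :
    Function.Injective A.mulVecLin :=
  Function.LeftInverse.injective (g := A'.mulVecLin) fun x => by
    simp [mulVec_mulVec, h]

theorem disjoint_range_mulVecLin [Fintype κ] [Fintype μ] [DecidableEq κ] (hA : A' * A = 1)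
    (hB : A' * B = 0) :
    Disjoint (LinearMap.range A.mulVecLin) (LinearMap.range B.mulVecLin) := by
  rw [Submodule.disjoint_def]
  rintro _ ⟨x, rfl⟩ ⟨y, hy⟩
  have hx : x = 0 := by
    simpa [mulVec_mulVec, hA, hB] using (congrArg A'.mulVecLin hy).symm
  simp [hx]

theorem range_mulVecLin_sup_eq_top [Fintype κ] [Fintype μ] [DecidableEq ι]
    (h : A * A' + B * B' = 1) :
    LinearMap.range A.mulVecLin ⊔ LinearMap.range B.mulVecLin = ⊤ := by
  refine Submodule.eq_top_iff'.2 fun v => Submodule.mem_sup.2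
    ⟨_, ⟨A' *ᵥ v, rfl⟩, _, ⟨B' *ᵥ v, rfl⟩, ?_⟩
  simp [mulVec_mulVec, ← add_mulVec, h]

end Splitting

theorem isPrimitiveSub_range_mulVecLin {ι κ μ : Type*} [Fintype ι] [Fintype κ] [Fintype μ]
    [DecidableEq ι] {A : Matrix ι κ ℤ} {B : Matrix ι μ ℤ} {A' : Matrix κ ι ℤ}
    {B' : Matrix μ ι ℤ} (hBA : B' * A = 0) (h : A * A' + B * B' = 1) :
    IsPrimitiveSub (LinearMap.range A.mulVecLin) := by
  rintro v k hk ⟨x, hx⟩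
  have hv : B' *ᵥ v = 0 := by
    have : k • (B' *ᵥ v) = 0 := by
      rw [← Matrix.mulVec_smul, ← hx]
      simp [Matrix.mulVec_mulVec, hBA]
    exact (smul_eq_zero.1 this).resolve_left hk
  refine ⟨A' *ᵥ v, ?_⟩
  have := congrArg (· *ᵥ v) h
  simp only [Matrix.add_mulVec, ← Matrix.mulVec_mulVec, hv, Matrix.mulVec_zero, add_zero,
    Matrix.one_mulVec] at this
  simpa using this

section BinaryForms

theorem intCongruent_binary_shear (a b c k : ℤ) :
    IntCongruent !![a, b; b, c] !![a, b + k * a; b + k * a, c + 2 * k * b + k ^ 2 * a] := by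
  refine ⟨!![1, k; 0, 1], !![1, -k; 0, 1], ?_, ?_, ?_⟩ <;>
    ext i j <;> fin_cases i <;> fin_cases j <;> simp [Matrix.mul_apply, Fin.sum_univ_succ] <;> ring

theorem intCongruent_binary_swap (a b c : ℤ) : IntCongruent !![a, b; b, c] !![c, b; b, a] := by
  refine ⟨!![0, 1; 1, 0], !![0, 1; 1, 0], ?_, ?_, ?_⟩ <;>
    ext i j <;> fin_cases i <;> fin_cases j <;> simp [Matrix.mul_apply, Fin.sum_univ_succ]

theorem intCongruent_binary_neg_offDiag (a b c : ℤ) :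
    IntCongruent !![a, b; b, c] !![a, -b; -b, c] := by
  refine ⟨!![1, 0; 0, -1], !![1, 0; 0, -1], ?_, ?_, ?_⟩ <;>
    ext i j <;> fin_cases i <;> fin_cases j <;> simp [Matrix.mul_apply, Fin.sum_univ_succ]

theorem intCongruent_A2_of_det_eq_three {a b c : ℤ} (ha : 0 < a) (hae : Even a) (hce : Even c)
    (hdet : a * c - b ^ 2 = 3) : IntCongruent !![a, b; b, c] !![2, -1; -1, 2] := by
  induction hm : a.natAbs + b.natAbs using Nat.strong_induction_on generalizing a b c with
  | _ m ih =>
  have hc : 0 < c := by nlinarith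
  by_cases hb : a < 2 * |b|
  · -- a shear by `∓ a` strictly decreases `|b|`
    set k := -b.sign
    have hlt : (b + k * a).natAbs < b.natAbs := by
      rcases lt_trichotomy b 0 with h | h | h <;>
        simp [k, Int.sign_eq_neg_one_of_neg, Int.sign_eq_one_of_pos, h, abs_of_neg, abs_of_pos]
          at hb ⊢ <;> omega
    refine (intCongruent_binary_shear a b c k).trans (ih _ (by omega) ha hae ?_ ?_ rfl)
    · obtain ⟨a', rfl⟩ := hae
      obtain ⟨c', rfl⟩ := hce
      exact ⟨c' + k * b + k ^ 2 * a', by ring⟩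
    · linear_combination hdet
  by_cases hca : c < a
  · exact (intCongruent_binary_swap a b c).trans
      (ih _ (by omega) hc hce hae (by linear_combination hdet) rfl)
  -- the form is reduced: `2|b| ≤ a ≤ c` forces `a = c = 2` and `b = ±1`
  have ha2 : a = 2 := by
    have : a ≤ 2 := by nlinarith [sq_abs b, abs_nonneg b]
    obtain ⟨a', rfl⟩ := hae
    omega
  subst ha2
  have hb1 : b = -1 ∨ b = 1 := by
    obtain ⟨c', rfl⟩ := hce
    have : b ≠ 0 := by rintro rfl; omega
    rcases abs_cases b with ⟨h1, h2⟩ | ⟨h1, h2⟩ <;> omega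
  obtain rfl : c = 2 := by rcases hb1 with rfl | rfl <;> linarith
  rcases hb1 with rfl | rfl
  · exact IntCongruent.refl _
  · exact intCongruent_binary_neg_offDiag 2 1 2

end BinaryForms

theorem exists_mul_sub_three_mul_sq_eq_one {m : ℕ} (hm : Nat.Coprime 3 m)
    (h : ∃ x : ZMod m, x ^ 2 = -3) : ∃ t c : ℤ, m * t - 3 * c ^ 2 = 1 := by
  obtain ⟨x, hx⟩ := h
  obtain ⟨v, hv⟩ : ∃ v : ZMod m, 3 * v = 1 := ⟨_, (ZMod.unitOfCoprime 3 hm).mul_inv⟩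
  -- `c ≡ x / 3` satisfies `3 c² + 1 ≡ 0 (mod m)`
  have hc : 3 * (x * v) ^ 2 + 1 = 0 := by linear_combination (3 * v ^ 2) * hx - (3 * v + 1) * hv
  obtain ⟨t, ht⟩ : (m : ℤ) ∣ 3 * ((x * v).cast : ℤ) ^ 2 + 1 := by
    rw [← ZMod.intCast_zmod_eq_zero_iff_dvd]
    push_cast [ZMod.intCast_cast, ZMod.cast_id']
    exact hc
  exact ⟨t, (x * v).cast, by linarith⟩

-- The columns are `v = (Bt, B, c)` and the basis `(-t, 1, 0)`, `(3c, 0, 1)` of `v^⊥`.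
theorem intCongruent_U_sum_neg_three_mul {B t c : ℤ} (h : 2 * B * t - 3 * c ^ 2 = 1) :
    IntCongruent (fromBlocks Ugram 0 0 !![-(3 * B)])
      (fromBlocks !![B] 0 0 (-!![2 * t, -(3 * c); -(3 * c), 3 * B])) := by
  refine ⟨fromBlocks !![B * t; B] !![-t, 3 * c; 1, 0] !![c] !![0, 1],
    fromBlocks !![1, t] !![-(3 * c)] !![-B, B * t - 3 * c ^ 2; -c, -(t * c)]
      !![3 * c * B; 2 * B * t],
    ?_, ?_, ?_⟩ <;>
    ext (i | i) (j | j) <;> fin_cases i <;> fin_cases j <;>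
    simp [Matrix.mul_apply, Fin.sum_univ_succ, Fintype.sum_sum_type, Ugram] <;>
    first | ring1 | linear_combination h | linear_combination B * h

theorem intCongruent_U_sum_neg_three_mul_A2 {B t c : ℤ} (hB : 0 ≤ B) (heven : Even B)
    (h : 2 * B * t - 3 * c ^ 2 = 1) :
    IntCongruent (fromBlocks Ugram 0 0 !![-(3 * B)]) (fromBlocks !![B] 0 0 A2gram) := by
  have ht : 0 < t := by nlinarith [sq_nonneg c]
  have hA2 : A2gram = -!![2, -1; -1, 2] := by ext i j; fin_cases i <;> fin_cases j <;> rfl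
  refine (intCongruent_U_sum_neg_three_mul h).trans ((IntCongruent.refl _).fromBlocks ?_)
  rw [hA2]
  obtain ⟨b, rfl⟩ := heven
  exact (intCongruent_A2_of_det_eq_three (by omega) ⟨t, by ring⟩ ⟨3 * b, by ring⟩
    (by linear_combination 3 * h)).neg

def U2E82gram :
    Matrix ((Fin 2 × Fin 2) ⊕ (Fin 2 × Fin 8)) ((Fin 2 × Fin 2) ⊕ (Fin 2 × Fin 8)) ℤ :=
  Sgram.submatrix (Sum.map id Sum.inl) (Sum.map id Sum.inl)

def k3IdxEquiv : K3Idx ≃ ((Fin 2 × Fin 2) ⊕ (Fin 2 × Fin 8)) ⊕ (Fin 2 ⊕ Fin 1) where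
  toFun
    | .inl (⟨0, _⟩, i) => .inl (.inl (0, i))
    | .inl (⟨1, _⟩, i) => .inl (.inl (1, i))
    | .inl (⟨2, _⟩, i) => .inr (.inl i)
    | .inr (.inl p) => .inl (.inr p)
    | .inr (.inr _) => .inr (.inr 0)
  invFun
    | .inl (.inl (k, i)) => .inl (k.castSucc, i)
    | .inl (.inr p) => .inr (.inl p)
    | .inr (.inl i) => .inl (2, i)
    | .inr (.inr _) => .inr (.inr ())
  left_inv := by decide
  right_inv := by decide

def sIdxEquiv : Fin 1 ⊕ SIdx ≃ ((Fin 2 × Fin 2) ⊕ (Fin 2 × Fin 8)) ⊕ (Fin 1 ⊕ Fin 2) where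
  toFun
    | .inl i => .inr (.inl i)
    | .inr (.inl p) => .inl (.inl p)
    | .inr (.inr (.inl p)) => .inl (.inr p)
    | .inr (.inr (.inr i)) => .inr (.inr i)
  invFun
    | .inl (.inl p) => .inr (.inl p)
    | .inl (.inr p) => .inr (.inr (.inl p))
    | .inr (.inl i) => .inl i
    | .inr (.inr i) => .inr (.inr (.inr i))
  left_inv := by rintro (_ | _ | _ | _) <;> rfl
  right_inv := by rintro ((_ | _) | _ | _) <;> rfl

theorem LK3gram_eq_submatrix (n : ℕ) :
    LK3gram n = (fromBlocks U2E82gram 0 0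
      (fromBlocks Ugram 0 0 !![-(2 * ((n : ℤ) - 1))])).submatrix k3IdxEquiv k3IdxEquiv := by
  ext (⟨k, i⟩ | _ | _) (⟨l, j⟩ | _ | _) <;> try fin_cases k
  all_goals try fin_cases l
  all_goals rfl

theorem fromBlocks_Sgram_eq_submatrix (X : Matrix (Fin 1) (Fin 1) ℤ) :
    fromBlocks X 0 0 Sgram =
      (fromBlocks U2E82gram 0 0 (fromBlocks X 0 0 A2gram)).submatrix sIdxEquiv sIdxEquiv := by
  ext (_ | _ | _ | _) (_ | _ | _ | _) <;> rfl

theorem intCongruent_LK3gram_of {n : ℕ} {X : Matrix (Fin 1) (Fin 1) ℤ}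
    (h : IntCongruent (fromBlocks Ugram 0 0 !![-(2 * ((n : ℤ) - 1))])
      (fromBlocks X 0 0 A2gram)) :
    IntCongruent (LK3gram n) (fromBlocks X 0 0 Sgram) := by
  rw [LK3gram_eq_submatrix, fromBlocks_Sgram_eq_submatrix]
  exact (IntCongruent.submatrix_equiv _ _).symm.trans
    (((IntCongruent.refl _).fromBlocks h).trans (IntCongruent.submatrix_equiv _ _))

theorem stmt12_general {n β : ℕ} (hfact : 2 * (n - 1) = 3 * β) (hnd : ¬ 3 ∣ β)
    (hqr : ∃ x : ZMod (4 * (n - 1) / 3), x ^ 2 = -(3 : ZMod (4 * (n - 1) / 3))) :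
    ∃ (tB : Matrix K3Idx (Fin 1) ℤ) (sB : Matrix K3Idx (Fin 22) ℤ),
      Function.Injective tB.mulVecLin ∧ Function.Injective sB.mulVecLin ∧
      IsPrimitiveSub (LinearMap.range tB.mulVecLin) ∧
      IsPrimitiveSub (LinearMap.range sB.mulVecLin) ∧
      -- T and S are orthogonal:
      tBᵀ * LK3gram n * sB = 0 ∧
      -- T = ⟨β⟩:
      tBᵀ * LK3gram n * tB = !![(β : ℤ)] ∧
      -- S ≅ U^{⊕2} ⊕ E₈^{⊕2} ⊕ A₂ (integral base change):
      (∃ (P : Matrix (Fin 22) SIdx ℤ) (Q : Matrix SIdx (Fin 22) ℤ),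
        P * Q = 1 ∧ Q * P = 1 ∧ Pᵀ * (sBᵀ * LK3gram n * sB) * P = Sgram) ∧
      -- L = T ⊕ S:
      Disjoint (LinearMap.range tB.mulVecLin) (LinearMap.range sB.mulVecLin) ∧
      LinearMap.range tB.mulVecLin ⊔ LinearMap.range sB.mulVecLin = ⊤ := by
  have h3 : Nat.Coprime 3 (2 * β) :=
    Nat.Coprime.mul_right (by norm_num) ((Nat.Prime.coprime_iff_not_dvd Nat.prime_three).2 hnd)
  obtain ⟨t, c, htc⟩ := exists_mul_sub_three_mul_sq_eq_one h3
    (by rwa [show 4 * (n - 1) / 3 = 2 * β by omega] at hqr)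
  push_cast at htc
  have hβ : β ≠ 0 := by rintro rfl; exact hnd (dvd_zero 3)
  have hn : -(2 * ((n : ℤ) - 1)) = -(3 * β) := by omega
  have e : Fin 22 ≃ SIdx := (Fintype.equivFinOfCardEq (rfl : Fintype.card SIdx = 22)).symm
  obtain ⟨M, N, hMN, hNM, hgram⟩ : IntCongruent (LK3gram n)
      (fromBlocks !![(β : ℤ)] 0 0 (Sgram.submatrix e e)) :=
    (intCongruent_LK3gram_of (hn ▸ intCongruent_U_sum_neg_three_mul_A2 (by positivity)
      ⟨(β / 2 : ℕ), by omega⟩ htc)).trans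
      ((IntCongruent.refl _).fromBlocks (IntCongruent.submatrix_equiv Sgram e))
  rw [← fromCols_toCols M, ← fromRows_toRows N, fromCols_mul_fromRows] at hMN
  rw [← fromCols_toCols M, ← fromRows_toRows N, fromRows_mul_fromCols_eq_one_iff] at hNM
  rw [← fromCols_toCols M, transpose_fromCols_mul_mul_fromCols, fromBlocks_inj] at hgram
  obtain ⟨hAA, hAB, hBA, hBB⟩ := hNM
  obtain ⟨hT, hTS, -, hS⟩ := hgram
  exact ⟨M.toCols₁, M.toCols₂, injective_mulVecLin_of_mul_eq_one hAA,
    injective_mulVecLin_of_mul_eq_one hBB, isPrimitiveSub_range_mulVecLin hBA hMN,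
    isPrimitiveSub_range_mulVecLin hAB ((add_comm _ _).trans hMN), hTS, hT,
    hS ▸ (IntCongruent.submatrix_equiv Sgram e).symm, disjoint_range_mulVecLin hAA hAB,
    range_mulVecLin_sup_eq_top hMN⟩

/-- if `3` divides `2(n-1)` exactly once (`2(n-1) = 3β`, `3 ∤ β`) and `-3`
is a quadratic residue modulo `4(n-1)/3`, then the admissible triple `(3,11,0)` is
realized by orthogonal primitive sublattices `T = ⟨β⟩` (rank one, Gram `(β)`) and
`S ≅ U^{⊕2} ⊕ E₈^{⊕2} ⊕ A₂` of `L`, with `L = T ⊕ S`. -/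
theorem stmt12 {n β : ℕ} (hn : 2 ≤ n) (hfact : 2 * (n - 1) = 3 * β) (hnd : ¬ 3 ∣ β)
    (hqr : ∃ x : ZMod (4 * (n - 1) / 3), x ^ 2 = -(3 : ZMod (4 * (n - 1) / 3))) :
    ∃ (tB : Matrix K3Idx (Fin 1) ℤ) (sB : Matrix K3Idx (Fin 22) ℤ),
      Function.Injective tB.mulVecLin ∧ Function.Injective sB.mulVecLin ∧
      IsPrimitiveSub (LinearMap.range tB.mulVecLin) ∧
      IsPrimitiveSub (LinearMap.range sB.mulVecLin) ∧
      -- T and S are orthogonal: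
      tBᵀ * LK3gram n * sB = 0 ∧
      -- T = ⟨β⟩:
      tBᵀ * LK3gram n * tB = !![(β : ℤ)] ∧
      -- S ≅ U^{⊕2} ⊕ E₈^{⊕2} ⊕ A₂ (integral base change):
      (∃ (P : Matrix (Fin 22) SIdx ℤ) (Q : Matrix SIdx (Fin 22) ℤ),
        P * Q = 1 ∧ Q * P = 1 ∧ Pᵀ * (sBᵀ * LK3gram n * sB) * P = Sgram) ∧
      -- L = T ⊕ S:
      Disjoint (LinearMap.range tB.mulVecLin) (LinearMap.range sB.mulVecLin) ∧
      LinearMap.range tB.mulVecLin ⊔ LinearMap.range sB.mulVecLin = ⊤ :=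
  stmt12_general hfact hnd hqr
end

section
/- Let A_⟨6⟩ = Z/6Z with quadratic form value 1/6 on a generator s, and A = Z/3Z(4/3) ⊕ Z/3Z(4/3) with generators t_1, t_2. Let Γ ⊆ A_⟨6⟩(-1) ⊕ A be the subgroup generated by 2s + t_1 + t_2. Then Γ is isotropic, its orthogonal complement is Γ^⊥ = ⟨s + t_1, s + t_2⟩, and the quotient Γ^⊥/Γ is cyclic of order 6 with quadratic form value 7/6 mod 2Z on the generator [s + t_1]. -/
/-- `ℚ/2ℤ`. -/
abbrev QMod2 : Type := ℚ ⧸ AddSubgroup.zmultiples (2 : ℚ)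
/-- `ℚ/ℤ`. -/
abbrev QMod1 : Type := ℚ ⧸ AddSubgroup.zmultiples (1 : ℚ)

def pi2 : ℚ → QMod2 := QuotientAddGroup.mk
def pi1 : ℚ → QMod1 := QuotientAddGroup.mk

/-- The group `A_{⟨6⟩}(-1) ⊕ ℤ/3(4/3) ⊕ ℤ/3(4/3)` supporting the finite quadratic form. -/
abbrev A16 : Type := ZMod 6 × ZMod 3 × ZMod 3

/-- The quadratic form `(-q_{⟨6⟩}) ⊕ q`: `q(s,t₁,t₂) = -s²/6 + 4t₁²/3 + 4t₂²/3 (mod 2ℤ)`. -/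
def q16 (x : A16) : QMod2 :=
  pi2 (-(x.1.val : ℚ) ^ 2 / 6 + 4 * (x.2.1.val : ℚ) ^ 2 / 3 + 4 * (x.2.2.val : ℚ) ^ 2 / 3)

/-- The associated bilinear form, valued in `ℚ/ℤ`. -/
def b16 (x y : A16) : QMod1 :=
  pi1 (-(x.1.val : ℚ) * (y.1.val : ℚ) / 6 + 4 * (x.2.1.val : ℚ) * (y.2.1.val : ℚ) / 3 +
    4 * (x.2.2.val : ℚ) * (y.2.2.val : ℚ) / 3)

/-- `Γ` = subgroup generated by `2s + t₁ + t₂`. -/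
def Γ16 : AddSubgroup A16 := AddSubgroup.closure {((2 : ZMod 6), (1 : ZMod 3), (1 : ZMod 3))}

/-!
All claims are finite checks in the group `ℤ/6 × ℤ/3 × ℤ/3` of order 54. The values of `q16` and
`b16` are integers divided by 6, taken modulo `2ℤ` resp. `ℤ`, so they are governed by divisibility
of the numerators by 12 resp. 6. Since `γ = 2s + t₁ + t₂` has order 3, `Γ = {0, γ, 2γ}`, and
`⟨g₁, g₂⟩ = {m g₁ + n g₂ | m, n < 6}`; after these rewrites every claim is decided by evaluation.
The class of `g₁ = s + t₁` has order 6 in `Γ^⊥/Γ` because `g₁` has order 6 and `⟨g₁⟩ ∩ Γ = 0`.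
-/

local notation "γ" => ((2 : ZMod 6), (1 : ZMod 3), (1 : ZMod 3))
local notation "g₁" => ((1 : ZMod 6), (1 : ZMod 3), (0 : ZMod 3))
local notation "g₂" => ((1 : ZMod 6), (0 : ZMod 3), (1 : ZMod 3))

theorem QuotientAddGroup.mk_intCast_div_eq_zero_iff {m d : ℤ} (hd : d ≠ 0) (n : ℤ) :
    ((n / d : ℚ) : ℚ ⧸ AddSubgroup.zmultiples (m : ℚ)) = 0 ↔ m * d ∣ n := by
  simp only [QuotientAddGroup.eq_zero_iff, AddSubgroup.mem_zmultiples_iff, zsmul_eq_mul,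
    eq_div_iff (Int.cast_ne_zero (α := ℚ) |>.2 hd), dvd_def]
  refine exists_congr fun k => ?_
  rw [eq_comm, ← Int.cast_inj (α := ℚ)]
  push_cast
  ring_nf

namespace AddSubgroup

variable {G : Type*} [Finite G]

theorem mem_closure_singleton_iff_exists_lt_addOrderOf [AddGroup G] {x y : G} :
    y ∈ closure {x} ↔ ∃ n < addOrderOf x, n • x = y := by
  classical
  simp [← zmultiples_eq_closure, mem_zmultiples_iff_mem_range_addOrderOf]

theorem mem_closure_pair_iff_exists_lt_addOrderOf [AddCommGroup G] {x y z : G} :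
    z ∈ closure {x, y} ↔ ∃ m < addOrderOf x, ∃ n < addOrderOf y, m • x + n • y = z := by
  rw [← Set.singleton_union, closure_union, mem_sup]
  simp only [mem_closure_singleton_iff_exists_lt_addOrderOf]
  aesop

end AddSubgroup

def q16Num (x : A16) : ℤ := -(x.1.val : ℤ) ^ 2 + 8 * (x.2.1.val : ℤ) ^ 2 + 8 * (x.2.2.val : ℤ) ^ 2

def b16Num (x y : A16) : ℤ :=
  -(x.1.val : ℤ) * y.1.val + 8 * x.2.1.val * y.2.1.val + 8 * x.2.2.val * y.2.2.val

theorem q16_eq (x : A16) : q16 x = pi2 (q16Num x / 6) := by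
  rw [q16]; congr 1; simp only [q16Num]; push_cast; ring

theorem b16_eq (x y : A16) : b16 x y = pi1 (b16Num x y / 6) := by
  rw [b16]; congr 1; simp only [b16Num]; push_cast; ring

theorem q16_eq_pi2_iff (x : A16) (n : ℤ) : q16 x = pi2 (n / 6) ↔ 12 ∣ q16Num x - n := by
  have h := QuotientAddGroup.mk_intCast_div_eq_zero_iff (m := 2) (d := 6) (by norm_num) (q16Num x - n)
  rw [Int.cast_ofNat, Int.cast_ofNat] at h
  rw [q16_eq, pi2, ← sub_eq_zero, ← QuotientAddGroup.mk_sub, ← sub_div, ← Int.cast_sub, h]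
  rfl

theorem b16_eq_zero_iff (x y : A16) : b16 x y = 0 ↔ 6 ∣ b16Num x y := by
  have h := QuotientAddGroup.mk_intCast_div_eq_zero_iff (m := 1) (d := 6) (by norm_num) (b16Num x y)
  rw [Int.cast_one, Int.cast_ofNat, one_mul] at h
  rw [b16_eq, pi1, h]

theorem addOrderOf_γ : addOrderOf γ = 3 := (addOrderOf_eq_iff (by norm_num)).2 (by decide)

theorem addOrderOf_g₁ : addOrderOf g₁ = 6 := (addOrderOf_eq_iff (by norm_num)).2 (by decide)

theorem addOrderOf_g₂ : addOrderOf g₂ = 6 := (addOrderOf_eq_iff (by norm_num)).2 (by decide)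

theorem mem_Γ16_iff {x : A16} : x ∈ Γ16 ↔ ∃ n < 3, n • γ = x := by
  rw [Γ16, AddSubgroup.mem_closure_singleton_iff_exists_lt_addOrderOf, addOrderOf_γ]

theorem orthogonal_Γ16_iff (x : A16) :
    (∀ y ∈ Γ16, b16 x y = 0) ↔ ∀ n < 3, 6 ∣ b16Num x (n • γ) := by
  simp only [mem_Γ16_iff, b16_eq_zero_iff]
  aesop

theorem q16_eq_zero_of_mem_Γ16 : ∀ x ∈ Γ16, q16 x = 0 := by
  have h0 : (0 : QMod2) = pi2 ((0 : ℤ) / 6) := by simp [pi2]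
  simp only [mem_Γ16_iff, h0, q16_eq_pi2_iff]
  decide

theorem b16_eq_zero_of_mem_Γ16 : ∀ x ∈ Γ16, ∀ y ∈ Γ16, b16 x y = 0 := by
  simp only [mem_Γ16_iff, b16_eq_zero_iff]
  decide

theorem orthogonal_Γ16_eq_closure :
    {x : A16 | ∀ y ∈ Γ16, b16 x y = 0} = AddSubgroup.closure {g₁, g₂} := by
  ext x
  simp only [Set.mem_ofPred_eq, SetLike.mem_coe, orthogonal_Γ16_iff,
    AddSubgroup.mem_closure_pair_iff_exists_lt_addOrderOf, addOrderOf_g₁, addOrderOf_g₂]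
  revert x
  decide

theorem exists_zsmul_sub_mem_Γ16 {x : A16} (hx : ∀ y ∈ Γ16, b16 x y = 0) :
    ∃ k : ℤ, x - k • g₁ ∈ Γ16 := by
  have h : ∀ x : A16, (∀ n < 3, 6 ∣ b16Num x (n • γ)) → ∃ k < 6, x - k • g₁ ∈ Γ16 := by
    simp only [mem_Γ16_iff]
    decide
  obtain ⟨k, -, hk⟩ := h x ((orthogonal_Γ16_iff x).1 hx)
  exact ⟨k, by rwa [natCast_zsmul]⟩

theorem disjoint_Γ16_zmultiples_g₁ : Disjoint Γ16 (AddSubgroup.zmultiples g₁) := by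
  rw [AddSubgroup.disjoint_def, AddSubgroup.zmultiples_eq_closure]
  simp only [mem_Γ16_iff, AddSubgroup.mem_closure_singleton_iff_exists_lt_addOrderOf,
    addOrderOf_g₁]
  decide

theorem zsmul_g₁_mem_Γ16_iff (k : ℤ) : k • g₁ ∈ Γ16 ↔ 6 ∣ k := by
  rw [show (6 : ℤ) = (addOrderOf g₁ : ℕ) by rw [addOrderOf_g₁]; rfl,
    addOrderOf_dvd_iff_zsmul_eq_zero]
  exact ⟨fun h => AddSubgroup.disjoint_def.1 disjoint_Γ16_zmultiples_g₁ h
    (AddSubgroup.zsmul_mem_zmultiples g₁ k), fun h => h ▸ zero_mem _⟩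

theorem q16_g₁_add_of_mem_Γ16 : ∀ y ∈ Γ16, q16 (g₁ + y) = pi2 (7 / 6) := by
  have h : (7 / 6 : ℚ) = ((7 : ℤ) : ℚ) / 6 := by norm_num
  simp only [mem_Γ16_iff, h, q16_eq_pi2_iff]
  decide

/-- `Γ = ⟨2s + t₁ + t₂⟩ ⊆ A_{⟨6⟩}(-1) ⊕ ℤ/3(4/3)^{⊕2}` is isotropic, its
orthogonal complement is `Γ^⊥ = ⟨s + t₁, s + t₂⟩`, and `Γ^⊥/Γ` is cyclic of order 6,
generated by the class of `s + t₁`, on which the induced quadratic form is well defined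
with value `7/6 (mod 2ℤ)`. -/
theorem stmt16 :
    -- Γ is isotropic:
    (∀ x ∈ Γ16, q16 x = 0) ∧
    -- Γ^⊥ = ⟨s + t₁, s + t₂⟩:
    ({x : A16 | ∀ y ∈ Γ16, b16 x y = 0} =
      ↑(AddSubgroup.closure {((1 : ZMod 6), (1 : ZMod 3), (0 : ZMod 3)),
                             ((1 : ZMod 6), (0 : ZMod 3), (1 : ZMod 3))})) ∧
    -- Γ ⊆ Γ^⊥:
    (∀ x ∈ Γ16, ∀ y ∈ Γ16, b16 x y = 0) ∧
    -- Γ^⊥/Γ is cyclic, generated by the class of `g = s + t₁`: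
    (∀ x ∈ {x : A16 | ∀ y ∈ Γ16, b16 x y = 0}, ∃ k : ℤ,
      x - k • ((1 : ZMod 6), (1 : ZMod 3), (0 : ZMod 3)) ∈ Γ16) ∧
    -- the class of `g` has order exactly 6 in `Γ^⊥/Γ`:
    (∀ k : ℤ, k • ((1 : ZMod 6), (1 : ZMod 3), (0 : ZMod 3)) ∈ Γ16 ↔ (6 : ℤ) ∣ k) ∧
    -- the induced quadratic form on `Γ^⊥/Γ` takes value `7/6` at the class of `g`:
    (∀ y ∈ Γ16, q16 (((1 : ZMod 6), (1 : ZMod 3), (0 : ZMod 3)) + y) = pi2 (7 / 6)) :=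
  ⟨q16_eq_zero_of_mem_Γ16, orthogonal_Γ16_eq_closure, b16_eq_zero_of_mem_Γ16,
    fun _ => exists_zsmul_sub_mem_Γ16, zsmul_g₁_mem_Γ16_iff, q16_g₁_add_of_mem_Γ16⟩
end

section
/- Let π be the endomorphism of U ⊕ U(3) (basis e_1, e_2 for U and f_1, f_2 for U(3)) given by e_1 ↦ e_1 - f_1, e_2 ↦ -2e_2 - f_2, f_1 ↦ -2f_1 + 3e_1, f_2 ↦ f_2 + 3e_2. Then π is an isometry of order 3, and the Z/3Z-valued homomorphism α = (e_1, -) satisfies α ∘ π = α. -/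
open Matrix

/-- Gram matrix of `U ⊕ U(3)` in the basis `e₁, e₂, f₁, f₂`. -/
def UU3gram : Matrix (Fin 4) (Fin 4) ℤ :=
  !![0, 1, 0, 0; 1, 0, 0, 0; 0, 0, 0, 3; 0, 0, 3, 0]

/-- Matrix of `π : e₁ ↦ e₁ - f₁, e₂ ↦ -2e₂ - f₂, f₁ ↦ 3e₁ - 2f₁, f₂ ↦ 3e₂ + f₂`
(columns are the images of the basis vectors). -/
def piIso : Matrix (Fin 4) (Fin 4) ℤ :=
  !![1, 0, 3, 0; 0, -2, 0, 3; -1, 0, -2, 0; 0, -1, 0, 1]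

/-! The pairings `(eᵢ, π v)` and `(eᵢ, v)` are the `i`-th entries of `G π v` and `G v`, so
`α ∘ π = α` follows from the entrywise congruence `G π ≡ G (mod 3)`. -/

theorem Matrix.intCast_mulVec_apply_eq_of_map_eq {m n R : Type*} [Fintype n] [CommRing R]
    {A B : Matrix m n ℤ} (h : A.map (Int.cast : ℤ → R) = B.map Int.cast) (v : n → ℤ) (i : m) :
    ((A *ᵥ v) i : R) = ((B *ᵥ v) i : R) := by
  have hA := RingHom.map_mulVec (Int.castRingHom R) A v i
  have hB := RingHom.map_mulVec (Int.castRingHom R) B v i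
  simp only [Int.coe_castRingHom] at hA hB
  rw [hA, hB, h]

theorem piIso_isometry : piIsoᵀ * UU3gram * piIso = UU3gram := by decide

theorem piIso_pow_three : piIso ^ 3 = 1 := by decide

theorem piIso_ne_one : piIso ≠ 1 := by decide

theorem UU3gram_mul_piIso_modEq :
    (UU3gram * piIso).map (Int.cast : ℤ → ZMod 3) = UU3gram.map Int.cast := by
  decide

/-- `π` is an isometry of `U ⊕ U(3)` of order 3, and the `ℤ/3ℤ`-valued
homomorphism `α = (e₁, -)` satisfies `α ∘ π = α`. -/
theorem stmt17 :
    piIsoᵀ * UU3gram * piIso = UU3gram ∧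
    piIso ^ 3 = 1 ∧ piIso ≠ 1 ∧
    (∀ v : Fin 4 → ℤ,
      ((UU3gram.mulVec (piIso.mulVec v)) 0 : ZMod 3) = ((UU3gram.mulVec v) 0 : ZMod 3)) := by
  refine ⟨piIso_isometry, piIso_pow_three, piIso_ne_one, fun v => ?_⟩
  rw [mulVec_mulVec]
  exact intCast_mulVec_apply_eq_of_map_eq UU3gram_mul_piIso_modEq v 0
end
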